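/- Let e₁ and e₂ be real numbers with 0 < e₂ < e₁ < 1. Define a sequence (A_{2m+1})_{m≥0} by A₁ = 1, A₃ = (e₁² + e₂²)/6, and for n = 0, 1, 2, …, A_{2n+5} = [ (e₁² + e₂²)(2n+3)² A_{2n+3} − 2 e₁² e₂² (n+1)(2n+1) A_{2n+1} ] / (2(n+2)(2n+5)). Then the series Σ_{m=0}^∞ A_{2m+1} converges and ∫_{e₂}^{e₁} ln((1 + q)/(1 − q)) / √((e₁² − q²)(q² − e₂²)) dq = π · Σ_{m=0}^∞ A_{2m+1}. -/

import Mathlib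

open Real intervalIntegral

/-- Incomplete elliptic integral of the first kind `F(φ, k)`. -/
noncomputable def ellipticF (φ k : ℝ) : ℝ :=
  ∫ θ in (0:ℝ)..φ, (1 - k ^ 2 * Real.sin θ ^ 2) ^ (-(1:ℝ)/2)

/-- Incomplete elliptic integral of the second kind `E(φ, k)`. -/
noncomputable def ellipticE (φ k : ℝ) : ℝ :=
  ∫ θ in (0:ℝ)..φ, (1 - k ^ 2 * Real.sin θ ^ 2) ^ ((1:ℝ)/2)

/-- Complete elliptic integral of the first kind `K(k)`. -/
noncomputable def completeK (k : ℝ) : ℝ := ellipticF (Real.pi / 2) k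

/-- Complete elliptic integral of the second kind `E(k)`. -/
noncomputable def completeE (k : ℝ) : ℝ := ellipticE (Real.pi / 2) k

/-- Inverse hyperbolic tangent. -/
noncomputable def arctanh (x : ℝ) : ℝ := Real.log ((1 + x) / (1 - x)) / 2

open MeasureTheory Set

noncomputable def mI (a b : ℝ) (m : ℕ) : ℝ :=
  ∫ θ in (-(π/2))..(π/2), ((a+b)/2 + (b-a)/2 * Real.sin θ)^m

lemma t_mem (a b θ : ℝ) (ha : 0 ≤ a) (hab : a ≤ b) :
    a ≤ (a+b)/2 + (b-a)/2 * Real.sin θ ∧ (a+b)/2 + (b-a)/2 * Real.sin θ ≤ b := by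
  have h1 := Real.neg_one_le_sin θ
  have h2 := Real.sin_le_one θ
  constructor <;> nlinarith

lemma cont_t (a b : ℝ) (m : ℕ) :
    Continuous fun θ => ((a+b)/2 + (b-a)/2 * Real.sin θ)^m := by fun_prop

lemma mI_zero (a b : ℝ) : mI a b 0 = π := by
  simp [mI]

lemma mI_one (a b : ℝ) : mI a b 1 = (a+b)/2 * π := by
  have h1 : IntervalIntegrable (fun _ : ℝ => (a+b)/2) volume (-(π/2)) (π/2) :=
    intervalIntegrable_const
  have h2 : IntervalIntegrable (fun θ : ℝ => (b-a)/2 * Real.sin θ) volume (-(π/2)) (π/2) :=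
    (continuous_const.mul Real.continuous_sin).intervalIntegrable _ _
  simp only [mI, pow_one]
  rw [intervalIntegral.integral_add h1 h2, intervalIntegral.integral_const,
    intervalIntegral.integral_const_mul, integral_sin]
  simp [Real.cos_pi_div_two]
  ring

lemma mI_rec (a b : ℝ) (hab : a < b) (m : ℕ) :
    ((m:ℝ)+2) * mI a b (m+2)
      = (2*(m:ℝ)+3) * ((a+b)/2) * mI a b (m+1) - ((m:ℝ)+1) * (a*b) * mI a b m := by
  set μ : ℝ := (a+b)/2 with hμ
  set r : ℝ := (b-a)/2 with hr
  have hr0 : r ≠ 0 := by rw [hr]; intro h; nlinarith [h]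
  set g' : ℝ → ℝ := fun θ =>
    -Real.sin θ * (μ + r*Real.sin θ)^(m+1)
      + Real.cos θ * (((m:ℝ)+1) * (μ + r*Real.sin θ)^m * (r * Real.cos θ)) with hg'
  have hG : ∀ θ : ℝ, HasDerivAt (fun θ => Real.cos θ * (μ + r*Real.sin θ)^(m+1)) (g' θ) θ := by
    intro θ
    have h1 : HasDerivAt (fun θ : ℝ => μ + r*Real.sin θ) (r * Real.cos θ) θ := by
      simpa using ((Real.hasDerivAt_sin θ).const_mul r).const_add μ
    have h2 : HasDerivAt (fun θ : ℝ => (μ + r*Real.sin θ)^(m+1))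
        (((m:ℝ)+1) * (μ + r*Real.sin θ)^m * (r * Real.cos θ)) θ := by
      have := (hasDerivAt_pow (m+1) (μ + r*Real.sin θ)).comp θ h1
      simpa [Nat.add_sub_cancel, Function.comp_def] using this
    simpa [hg', Pi.mul_def] using (Real.hasDerivAt_cos θ).mul h2
  have hcont : Continuous g' := by fun_prop
  have hzero : (∫ θ in (-(π/2))..(π/2), g' θ) = 0 := by
    rw [intervalIntegral.integral_eq_sub_of_hasDerivAt (fun θ _ => hG θ)
      (hcont.intervalIntegrable _ _)]
    simp [Real.cos_pi_div_two]
  have hpt : ∀ θ : ℝ, r * g' θ =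
      (-((m:ℝ)+2)) * (μ + r*Real.sin θ)^(m+2)
        + ((2*(m:ℝ)+3)*μ) * (μ + r*Real.sin θ)^(m+1)
        + (((m:ℝ)+1)*(r^2-μ^2)) * (μ + r*Real.sin θ)^m := by
    intro θ
    simp only [hg']
    linear_combination ((m:ℝ)+1) * r^2 * (μ + r*Real.sin θ)^m * (Real.sin_sq_add_cos_sq θ)
  have hi2 : IntervalIntegrable (fun θ => (μ + r*Real.sin θ)^(m+2)) volume (-(π/2)) (π/2) :=
    (cont_t a b (m+2)).intervalIntegrable _ _
  have hi1 : IntervalIntegrable (fun θ => (μ + r*Real.sin θ)^(m+1)) volume (-(π/2)) (π/2) :=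
    (cont_t a b (m+1)).intervalIntegrable _ _
  have hi0 : IntervalIntegrable (fun θ => (μ + r*Real.sin θ)^m) volume (-(π/2)) (π/2) :=
    (cont_t a b m).intervalIntegrable _ _
  have hsplit : (∫ θ in (-(π/2))..(π/2), r * g' θ)
      = (-((m:ℝ)+2)) * mI a b (m+2) + ((2*(m:ℝ)+3)*μ) * mI a b (m+1)
        + (((m:ℝ)+1)*(r^2-μ^2)) * mI a b m := by
    rw [intervalIntegral.integral_congr (g := fun θ =>
      (-((m:ℝ)+2)) * (μ + r*Real.sin θ)^(m+2)
        + ((2*(m:ℝ)+3)*μ) * (μ + r*Real.sin θ)^(m+1)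
        + (((m:ℝ)+1)*(r^2-μ^2)) * (μ + r*Real.sin θ)^m) (fun θ _ => hpt θ)]
    rw [intervalIntegral.integral_add (((hi2.const_mul _).add (hi1.const_mul _)))
      (hi0.const_mul _), intervalIntegral.integral_add (hi2.const_mul _) (hi1.const_mul _),
      intervalIntegral.integral_const_mul, intervalIntegral.integral_const_mul,
      intervalIntegral.integral_const_mul]
    rfl
  rw [intervalIntegral.integral_const_mul, hzero, mul_zero] at hsplit
  have hab' : r^2 - μ^2 = -(a*b) := by rw [hr, hμ]; ring
  rw [hab'] at hsplit
  linarith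

lemma mI_nonneg (a b : ℝ) (ha : 0 ≤ a) (hab : a ≤ b) (m : ℕ) : 0 ≤ mI a b m := by
  apply intervalIntegral.integral_nonneg (by linarith [pi_pos])
  intro θ _
  exact pow_nonneg (le_trans ha (t_mem a b θ ha hab).1) m

lemma mI_le (a b : ℝ) (ha : 0 ≤ a) (hab : a ≤ b) (m : ℕ) : mI a b m ≤ π * b^m := by
  have : mI a b m ≤ ∫ _ in (-(π/2))..(π/2), b^m := by
    apply intervalIntegral.integral_mono_on (by linarith [pi_pos])
      ((cont_t a b m).intervalIntegrable _ _) intervalIntegrable_const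
    intro θ _
    exact pow_le_pow_left₀ (le_trans ha (t_mem a b θ ha hab).1) (t_mem a b θ ha hab).2 m
  refine this.trans_eq ?_
  rw [intervalIntegral.integral_const, smul_eq_mul]
  ring

set_option maxHeartbeats 2000000 in
lemma main_int (e₁ e₂ : ℝ) (h0 : 0 < e₂) (h21 : e₂ < e₁) (h11 : e₁ < 1) :
    HasSum (fun m : ℕ => mI (e₂^2) (e₁^2) m / (2*(m:ℝ)+1))
      (∫ q in e₂..e₁,
        Real.log ((1 + q) / (1 - q)) / Real.sqrt ((e₁^2 - q^2) * (q^2 - e₂^2))) := by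
  set a : ℝ := e₂^2 with hadef
  set b : ℝ := e₁^2 with hbdef
  have ha : 0 < a := by positivity
  have hab : a < b := by rw [hadef, hbdef]; nlinarith
  have hb1 : b < 1 := by rw [hbdef]; nlinarith
  set μ : ℝ := (a+b)/2 with hμ
  set r : ℝ := (b-a)/2 with hr
  have hr0 : 0 < r := by rw [hr]; linarith
  set t : ℝ → ℝ := fun θ => μ + r * Real.sin θ with ht
  have ht0 : ∀ θ, 0 < t θ := by
    intro θ
    have := (t_mem a b θ ha.le hab.le).1
    simp only [ht]
    rw [hμ, hr]
    linarith [this]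
  have htb : ∀ θ, t θ ≤ b := fun θ => (t_mem a b θ ha.le hab.le).2
  have hta : ∀ θ, a ≤ t θ := fun θ => (t_mem a b θ ha.le hab.le).1
  set q : ℝ → ℝ := fun θ => Real.sqrt (t θ) with hq
  have hsa : Real.sqrt a = e₂ := by rw [hadef]; exact Real.sqrt_sq h0.le
  have hsb : Real.sqrt b = e₁ := by rw [hbdef]; exact Real.sqrt_sq (by linarith)
  set s : Set ℝ := Ioo (-(π/2)) (π/2) with hs
  -- bounds on q
  have hq_mem : ∀ θ ∈ s, q θ ∈ Ioo e₂ e₁ := by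
    intro θ hθ
    have h1 : Real.sin (-(π/2)) < Real.sin θ :=
      Real.strictMonoOn_sin ⟨le_refl _, by linarith [pi_pos]⟩
        ⟨hθ.1.le, hθ.2.le⟩ hθ.1
    have h2 : Real.sin θ < Real.sin (π/2) :=
      Real.strictMonoOn_sin ⟨hθ.1.le, hθ.2.le⟩ ⟨by linarith [pi_pos], le_refl _⟩ hθ.2
    rw [Real.sin_pi_div_two] at h2
    rw [Real.sin_neg, Real.sin_pi_div_two] at h1
    have hta' : a < t θ := by simp only [ht]; rw [hμ, hr]; nlinarith
    have htb' : t θ < b := by simp only [ht]; rw [hμ, hr]; nlinarith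
    constructor
    · rw [← hsa]; exact Real.sqrt_lt_sqrt ha.le hta'
    · rw [← hsb]; exact Real.sqrt_lt_sqrt (ht0 θ).le htb'
  have hq0 : ∀ θ, 0 < q θ := fun θ => Real.sqrt_pos.2 (ht0 θ)
  have hq1 : ∀ θ, q θ < 1 := by
    intro θ
    have : q θ ≤ Real.sqrt b := Real.sqrt_le_sqrt (htb θ)
    rw [hsb] at this; linarith
  have hqsq : ∀ θ, q θ ^ 2 = t θ := fun θ => Real.sq_sqrt (ht0 θ).le
  -- image
  have hqc : Continuous q := Real.continuous_sqrt.comp (by fun_prop)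
  have him : q '' s = Ioo e₂ e₁ := by
    apply Subset.antisymm
    · rintro x ⟨θ, hθ, rfl⟩; exact hq_mem θ hθ
    · have h1 : q (-(π/2)) = e₂ := by
        simp only [hq, ht, Real.sin_neg, Real.sin_pi_div_two]
        rw [show μ + r * -1 = a by rw [hμ, hr]; ring, hsa]
      have h2 : q (π/2) = e₁ := by
        simp only [hq, ht, Real.sin_pi_div_two]
        rw [show μ + r * 1 = b by rw [hμ, hr]; ring, hsb]
      have := intermediate_value_Ioo (by linarith [pi_pos] : -(π/2) ≤ π/2)
        (hqc.continuousOn (s := Icc (-(π/2)) (π/2)))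
      rw [h1, h2] at this
      exact this
  -- derivative
  set q' : ℝ → ℝ := fun θ => r * Real.cos θ / (2 * q θ) with hq'
  have hqd : ∀ θ ∈ s, HasDerivWithinAt q (q' θ) s θ := by
    intro θ _
    have h1 : HasDerivAt t (r * Real.cos θ) θ := by
      simpa [ht] using ((Real.hasDerivAt_sin θ).const_mul r).const_add μ
    have h2 : HasDerivAt q (1 / (2 * Real.sqrt (t θ)) * (r * Real.cos θ)) θ :=
      (Real.hasDerivAt_sqrt (ht0 θ).ne').comp θ h1
    have : (1 : ℝ) / (2 * Real.sqrt (t θ)) * (r * Real.cos θ) = q' θ := by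
      simp only [hq', hq]; ring
    rw [this] at h2
    exact h2.hasDerivWithinAt
  -- injectivity
  have hinj : InjOn q s := by
    apply StrictMonoOn.injOn
    intro x hx y hy hxy
    have h1 : Real.sin x < Real.sin y :=
      Real.strictMonoOn_sin ⟨hx.1.le, hx.2.le⟩ ⟨hy.1.le, hy.2.le⟩ hxy
    exact Real.sqrt_lt_sqrt (ht0 x).le (by simp only [ht]; nlinarith)
  -- change of variables
  set f : ℝ → ℝ := fun x => Real.log ((1 + x) / (1 - x)) / Real.sqrt ((b - x^2) * (x^2 - a))
    with hf
  have hchg : (∫ x in Ioo e₂ e₁, f x) = ∫ θ in s, |q' θ| • f (q θ) := by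
    rw [← him]
    exact integral_image_eq_integral_abs_deriv_smul measurableSet_Ioo hqd hinj f
  -- simplify integrand
  set h : ℝ → ℝ := fun θ => Real.log ((1 + q θ) / (1 - q θ)) / (2 * q θ) with hh
  have hcongr : (∫ θ in s, |q' θ| • f (q θ)) = ∫ θ in s, h θ := by
    apply setIntegral_congr_fun measurableSet_Ioo
    intro θ hθ
    have hcos : 0 < Real.cos θ := Real.cos_pos_of_mem_Ioo hθ
    have hsqrt : Real.sqrt ((b - q θ^2) * (q θ^2 - a)) = r * Real.cos θ := by
      rw [hqsq]
      have hid : (b - t θ) * (t θ - a) = (r * Real.cos θ)^2 := by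
        simp only [ht]
        rw [hμ, hr]
        linear_combination (-(((b-a)/2)^2)) * (Real.sin_sq_add_cos_sq θ)
      rw [hid, Real.sqrt_sq (by positivity)]
    have habs : |q' θ| = r * Real.cos θ / (2 * q θ) := by
      rw [hq', abs_of_pos (div_pos (mul_pos hr0 hcos) (by linarith [hq0 θ]))]
    have hrc : r * Real.cos θ ≠ 0 := (mul_pos hr0 hcos).ne'
    simp only [smul_eq_mul, hf, habs, hsqrt, hh]
    rw [div_mul_div_comm, mul_comm (r * Real.cos θ) (Real.log ((1 + q θ) / (1 - q θ))),
      mul_div_mul_right _ _ hrc]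
  -- pointwise power series
  have hps : ∀ θ : ℝ, HasSum (fun m : ℕ => (t θ)^m / (2*(m:ℝ)+1)) (h θ) := by
    intro θ
    have hx : |q θ| < 1 := by rw [abs_of_pos (hq0 θ)]; exact hq1 θ
    have hls := Real.hasSum_log_sub_log_of_abs_lt_one hx
    have hlog : Real.log (1 + q θ) - Real.log (1 - q θ)
        = Real.log ((1 + q θ) / (1 - q θ)) := by
      rw [Real.log_div (by linarith [hq0 θ]) (by linarith [hq1 θ])]
    rw [hlog] at hls
    have := hls.div_const (2 * q θ)
    convert this using 2 with m
    · rfl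
    rw [pow_succ, pow_mul, hqsq]
    have : q θ ≠ 0 := (hq0 θ).ne'
    field_simp
  -- dominated convergence
  have hHS : HasSum (fun m : ℕ => ∫ θ in s, (t θ)^m / (2*(m:ℝ)+1)) (∫ θ in s, h θ) := by
    apply MeasureTheory.hasSum_integral_of_dominated_convergence
      (bound := fun (m : ℕ) (_ : ℝ) => b^m)
    · intro m
      exact (Continuous.aestronglyMeasurable (by fun_prop))
    · intro m
      filter_upwards with θ
      have h1 : (1:ℝ) ≤ 2*(m:ℝ)+1 := by
        have := Nat.cast_nonneg (α := ℝ) m; linarith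
      rw [Real.norm_eq_abs,
        abs_of_nonneg (div_nonneg (pow_nonneg (ht0 θ).le m) (by linarith))]
      calc (t θ)^m / (2*(m:ℝ)+1) ≤ (t θ)^m := div_le_self (pow_nonneg (ht0 θ).le m) h1
        _ ≤ b^m := pow_le_pow_left₀ (ht0 θ).le (htb θ) m
    · filter_upwards with θ
      exact summable_geometric_of_lt_one (by positivity) hb1
    · exact MeasureTheory.integrable_const _
    · filter_upwards with θ
      exact hps θ
  -- term integrals
  have hterm : ∀ m : ℕ, (∫ θ in s, (t θ)^m / (2*(m:ℝ)+1)) = mI a b m / (2*(m:ℝ)+1) := by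
    intro m
    rw [MeasureTheory.integral_div]
    congr 1
    rw [mI, intervalIntegral.integral_of_le (by linarith [pi_pos] : -(π/2) ≤ π/2),
      MeasureTheory.integral_Ioc_eq_integral_Ioo]
  have hJ : (∫ q in e₂..e₁, f q) = ∫ x in Ioo e₂ e₁, f x := by
    rw [intervalIntegral.integral_of_le h21.le, MeasureTheory.integral_Ioc_eq_integral_Ioo]
  simp only [hf] at hJ
  rw [show (∫ q in e₂..e₁,
        Real.log ((1 + q) / (1 - q)) / Real.sqrt ((e₁^2 - q^2) * (q^2 - e₂^2)))
      = ∫ q in e₂..e₁, f q from rfl, hJ, hchg, hcongr]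
  exact (funext hterm : (fun m : ℕ => ∫ θ in s, (t θ)^m / (2*(m:ℝ)+1)) = _) ▸ hHS

theorem stmt_3 (e₁ e₂ : ℝ) (h0 : 0 < e₂) (h21 : e₂ < e₁) (h11 : e₁ < 1)
    (A : ℕ → ℝ) (hA0 : A 0 = 1) (hA1 : A 1 = (e₁ ^ 2 + e₂ ^ 2) / 6)
    (hArec : ∀ n : ℕ, A (n + 2) =
      ((e₁ ^ 2 + e₂ ^ 2) * (2 * (n:ℝ) + 3) ^ 2 * A (n + 1)
          - 2 * e₁ ^ 2 * e₂ ^ 2 * ((n:ℝ) + 1) * (2 * (n:ℝ) + 1) * A n)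
        / (2 * ((n:ℝ) + 2) * (2 * (n:ℝ) + 5))) :
    Summable A ∧
      (∫ q in e₂..e₁,
          Real.log ((1 + q) / (1 - q)) / Real.sqrt ((e₁ ^ 2 - q ^ 2) * (q ^ 2 - e₂ ^ 2)))
        = Real.pi * ∑' m, A m := by
  have hmain := main_int e₁ e₂ h0 h21 h11
  have hπ : (0:ℝ) < π := pi_pos
  have key : ∀ n : ℕ, A n = mI (e₂^2) (e₁^2) n / ((2*(n:ℝ)+1) * π)
      ∧ A (n+1) = mI (e₂^2) (e₁^2) (n+1) / ((2*(n:ℝ)+3) * π) := by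
    intro n
    induction n with
    | zero =>
      constructor
      · rw [hA0, mI_zero]
        norm_num
      · rw [hA1, mI_one]
        push_cast
        field_simp
        ring
    | succ n ih =>
      have hcast : ((n:ℝ)+1) = ((n+1 : ℕ) : ℝ) := by push_cast; ring
      constructor
      · rw [ih.2]
        push_cast
        ring_nf
      · have hrec := mI_rec (e₂^2) (e₁^2) (by nlinarith) n
        rw [show n+1+1 = n+2 from rfl, hArec n, ih.1, ih.2]
        have h1 : (2*(n:ℝ)+1) ≠ 0 := by positivity
        have h3 : (2*(n:ℝ)+3) ≠ 0 := by positivity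
        have h5 : (2*(n:ℝ)+5) ≠ 0 := by positivity
        have hn2 : ((n:ℝ)+2) ≠ 0 := by positivity
        have hm2 : mI (e₂^2) (e₁^2) (n+2)
            = ((2*(n:ℝ)+3) * ((e₂^2+e₁^2)/2) * mI (e₂^2) (e₁^2) (n+1)
                - ((n:ℝ)+1) * (e₂^2*e₁^2) * mI (e₂^2) (e₁^2) n) / ((n:ℝ)+2) := by
          rw [eq_div_iff hn2]
          linear_combination hrec
        rw [hm2]
        push_cast
        field_simp
        ring
  have hAeq : ∀ n : ℕ, A n = mI (e₂^2) (e₁^2) n / (2*(n:ℝ)+1) * (1/π) := by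
    intro n
    rw [(key n).1, ← div_div, div_eq_mul_one_div]
  have hS : Summable A :=
    (hmain.summable.mul_right (1/π)).congr fun n => (hAeq n).symm
  refine ⟨hS, ?_⟩
  have htsum : ∑' m, A m
      = (∫ q in e₂..e₁,
          Real.log ((1 + q) / (1 - q)) / Real.sqrt ((e₁ ^ 2 - q ^ 2) * (q ^ 2 - e₂ ^ 2))) / π := by
    rw [tsum_congr hAeq, tsum_mul_right, hmain.tsum_eq]
    ring
  rw [htsum]
  field_simp
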